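/- Every group is isomorphic to each of its interassociates: if (G, ⊣) is a group and (G, ⊢) is an interassociate of (G, ⊣), then the semigroup (G, ⊢) is isomorphic to the semigroup (G, ⊣). -/

import Mathlib

theorem interassociate_eq_mul_mul {M : Type*} [Monoid M] (h : M → M → M)
    (inter1 : ∀ x y z, h (x * y) z = x * h y z)
    (inter2 : ∀ x y z, h x y * z = h x (y * z)) (x y : M) :
    h x y = x * h 1 1 * y :=
  calc h x y = x * h 1 (1 * y) := by rw [← inter1, mul_one, one_mul]
    _ = x * h 1 1 * y := by rw [← inter2, mul_assoc]

theorem group_isomorphic_to_interassociate {G : Type*} [Group G] (h : G → G → G)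
    (inter1 : ∀ x y z, h (x * y) z = x * h y z)
    (inter2 : ∀ x y z, h x y * z = h x (y * z)) :
    ∃ ψ : G ≃ G, ∀ x y, ψ (h x y) = ψ x * ψ y := by
  refine ⟨Equiv.mulLeft (h 1 1), fun x y => ?_⟩
  simp only [Equiv.coe_mulLeft, interassociate_eq_mul_mul h inter1 inter2 x y, mul_assoc]
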